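/- arXiv:1003.5480 — 3 statements merged into one kernel-verified Lean document; each statement's English description precedes it below -/
import Mathlib

section
/- Let k ≥ 2. There is no deterministic mechanism f, mapping each k-tuple (ν_1,…,ν_k) of non-atomic Borel probability measures on [0,1) to a measurable partition (f_1(ν),…,f_k(ν)) of [0,1), with the following three properties: (a) if all declared measures are equal to a common measure ν, then ν(f_i(ν)) = 1/k for every i; (b) if the declared measures are not all equal, then ν_i(f_i(ν)) > 1/k for every i; (c) truthfulness: for every tuple of true measures (μ_1,…,μ_k), every player i, and every alternative declaration ν_i', one has μ_i(f_i(μ_1,…,ν_i',…,μ_k)) ≤ μ_i(f_i(μ_1,…,μ_i,…,μ_k)). -/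
/-!
Let `ν` be Lebesgue measure on the cake and `A` the piece player `0` receives when everybody
declares `ν`, so `ν A = 1/k`. If player `0` truly holds `ν` conditioned on `A` while everybody
else declares `ν`, then by lying (declaring `ν`) she would receive all of `A`; truthfulness
therefore forces her honest piece to contain almost all of `A`, hence to have `ν`-measure at
least `1/k`. Super-fairness gives every other player a piece of `ν`-measure more than `1/k`,
and `k` such pieces cannot partition a probability space.
-/

open MeasureTheory
open scoped ENNReal

/-- The cake `[0,1)`. -/
abbrev Cake : Type := ↥(Set.Ico (0 : ℝ) 1)

/-- A non-atomic Borel probability measure on `[0,1)`. -/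
def IsNonatomicProb (ν : Measure Cake) : Prop :=
  IsProbabilityMeasure ν ∧ ∀ x : Cake, ν {x} = 0

open Finset ProbabilityTheory

theorem ENNReal.card_mul_lt_sum {ι : Type*} [Fintype ι] {a : ι → ℝ≥0∞} {c : ℝ≥0∞}
    (hc : c ≠ ∞) (hle : ∀ i, c ≤ a i) {j : ι} (hlt : c < a j) :
    Fintype.card ι * c < ∑ i, a i := by
  classical
  calc (Fintype.card ι : ℝ≥0∞) * c = c + ∑ i ∈ univ.erase j, c := by
        rw [add_sum_erase _ (fun _ => c) (mem_univ j), sum_const, nsmul_eq_mul, card_univ]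
    _ < a j + ∑ i ∈ univ.erase j, a i :=
        ENNReal.add_lt_add_of_lt_of_le (ENNReal.sum_ne_top.2 fun _ _ => hc) hlt
          (sum_le_sum fun i _ => hle i)
    _ = ∑ i, a i := add_sum_erase _ a (mem_univ j)

theorem measure_le_inv_card_of_partition {Ω ι : Type*} [MeasurableSpace Ω] [Fintype ι]
    {μ : Measure Ω} [IsProbabilityMeasure μ] {s : ι → Set Ω} (hs : ∀ i, MeasurableSet (s i))
    (hd : Pairwise (Function.onFun Disjoint s)) (hu : ⋃ i, s i = Set.univ)
    (hle : ∀ i, (Fintype.card ι : ℝ≥0∞)⁻¹ ≤ μ (s i)) (j : ι) :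
    μ (s j) ≤ (Fintype.card ι : ℝ≥0∞)⁻¹ := by
  by_contra! hlt
  have : Nonempty ι := ⟨j⟩
  have hcard : (Fintype.card ι : ℝ≥0∞) ≠ 0 := by simp
  have hsum : ∑ i, μ (s i) = 1 := by
    simpa [hu, tsum_fintype] using (measure_iUnion (μ := μ) hd hs).symm
  have := ENNReal.card_mul_lt_sum (ENNReal.inv_ne_top.2 hcard) hle hlt
  rw [hsum, ENNReal.mul_inv_cancel hcard (ENNReal.natCast_ne_top _)] at this
  exact this.false

theorem le_measure_of_one_le_cond {Ω : Type*} [MeasurableSpace Ω] {μ : Measure Ω}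
    {s t : Set Ω} (hs : μ s ≠ ∞) (ht : MeasurableSet t) (h : 1 ≤ μ[t|s]) : μ s ≤ μ t := by
  rcases eq_or_ne (μ s) 0 with hs0 | hs0
  · simp [hs0]
  rw [cond_apply' ht] at h
  calc μ s = μ s * 1 := (mul_one _).symm
    _ ≤ μ s * ((μ s)⁻¹ * μ (s ∩ t)) := by gcongr
    _ = μ (s ∩ t) := ENNReal.mul_inv_cancel_left hs0 hs
    _ ≤ μ t := measure_mono Set.inter_subset_right

theorem IsNonatomicProb.cond {ν : Measure Cake} (hν : IsNonatomicProb ν) {s : Set Cake}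
    (hs : ν s ≠ 0) : IsNonatomicProb (ν[|s]) := by
  have := hν.1
  refine ⟨cond_isProbabilityMeasure hs, fun x => ?_⟩
  rw [cond_apply' (measurableSet_singleton x), measure_mono_null Set.inter_subset_right (hν.2 x),
    mul_zero]

theorem isNonatomicProb_comap_volume :
    IsNonatomicProb ((volume : Measure ℝ).comap Subtype.val) := by
  have hval : MeasurableEmbedding (Subtype.val : Cake → ℝ) :=
    MeasurableEmbedding.subtype_coe measurableSet_Ico
  refine ⟨⟨?_⟩, fun x => ?_⟩
  · rw [hval.comap_apply, Set.image_univ, Subtype.range_coe, Real.volume_Ico]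
    norm_num
  · rw [hval.comap_apply, Set.image_singleton, Real.volume_singleton]

/-- There is no deterministic truthful mechanism that is fair on equal declarations and
super-fair on unequal ones: no map `f` from `k`-tuples of non-atomic Borel probability
measures on `[0,1)` to measurable partitions of `[0,1)` can satisfy (a) if all declared
measures equal `ν` then every piece has `ν`-value `1/k`; (b) if the declared measures
are not all equal then every player `i` gets `ν i`-value `> 1/k`; and (c) truthfulness:
no player can strictly gain (in her true measure) by deviating from a truthful
declaration. -/
theorem no_deterministic_truthful_superfair_mechanism (k : ℕ) (hk : 2 ≤ k) :
    ¬ ∃ f : (Fin k → Measure Cake) → (Fin k → Set Cake),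
      (∀ ν : Fin k → Measure Cake, (∀ i, IsNonatomicProb (ν i)) →
        ((∀ i, MeasurableSet (f ν i)) ∧
          (∀ i j, i ≠ j → Disjoint (f ν i) (f ν j)) ∧
          (⋃ i, f ν i) = Set.univ)) ∧
      (∀ ν : Measure Cake, IsNonatomicProb ν →
        ∀ i, ν (f (fun _ => ν) i) = (k : ℝ≥0∞)⁻¹) ∧
      (∀ ν : Fin k → Measure Cake, (∀ i, IsNonatomicProb (ν i)) →
        (∃ i j, ν i ≠ ν j) →
        ∀ i, (k : ℝ≥0∞)⁻¹ < ν i (f ν i)) ∧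
      (∀ μ : Fin k → Measure Cake, (∀ i, IsNonatomicProb (μ i)) →
        ∀ (i : Fin k) (ν' : Measure Cake), IsNonatomicProb ν' →
          μ i (f (Function.update μ i ν') i) ≤ μ i (f μ i)) := by
  rintro ⟨f, hpart, hfair, hsuper, htruth⟩
  let ν : Measure Cake := (volume : Measure ℝ).comap Subtype.val
  have hν : IsNonatomicProb ν := isNonatomicProb_comap_volume
  have : IsProbabilityMeasure ν := hν.1
  let i₀ : Fin k := ⟨0, by omega⟩
  let i₁ : Fin k := ⟨1, by omega⟩
  have hi₁ : i₁ ≠ i₀ := by simp [i₀, i₁, Fin.ext_iff]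
  set A := f (fun _ => ν) i₀
  have hA : ν A = (k : ℝ≥0∞)⁻¹ := hfair ν hν i₀
  have hA₀ : ν A ≠ 0 := by simp [hA]
  have hμA : ν[A|A] = 1 := cond_apply_self hA₀ (measure_ne_top ν A)
  let P := Function.update (fun _ => ν) i₀ (ν[|A])
  have hP : ∀ i, IsNonatomicProb (P i) :=
    (Function.forall_update_iff _ fun _ m => IsNonatomicProb m).2 ⟨hν.cond hA₀, fun _ _ => hν⟩
  obtain ⟨hmeas, hdisj, hcover⟩ := hpart P hP
  have hunequal : ∃ i j, P i ≠ P j := by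
    refine ⟨i₀, i₁, fun h => ?_⟩
    simp only [P, Function.update_self, Function.update_of_ne hi₁] at h
    rw [h, hA, ENNReal.inv_eq_one, Nat.cast_eq_one] at hμA
    omega
  have hdeviate : Function.update P i₀ ν = fun _ => ν := by simp [P]
  -- By declaring `ν`, player `i₀` (true measure `ν[|A]`) would receive all of `A`.
  have hi₀ : (k : ℝ≥0∞)⁻¹ ≤ ν (f P i₀) := by
    have : ν[A|A] ≤ ν[f P i₀|A] := by
      simpa only [hdeviate, P, Function.update_self] using htruth P hP i₀ ν hν
    exact hA ▸ le_measure_of_one_le_cond (measure_ne_top ν A) (hmeas i₀) (hμA ▸ this)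
  have hothers (i : Fin k) (hi : i ≠ i₀) : (k : ℝ≥0∞)⁻¹ < ν (f P i) := by
    simpa [P, Function.update_of_ne hi] using hsuper P hP hunequal i
  have := measure_le_inv_card_of_partition hmeas hdisj hcover (j := i₁) fun i => by
    by_cases hi : i = i₀
    · simpa [hi] using hi₀
    · simpa using (hothers i hi).le
  exact (hothers i₁ hi₁).not_ge (by simpa using this)
end

section
/- Let μ_1, …, μ_k be non-atomic Borel probability measures on [0,1). Suppose there exists a Borel-measurable partition B_1, …, B_k of [0,1) with μ_i(B_i) > 1/k for every i (a 'super-fair' partition). Then there exists a partition Q_1, …, Q_k in 𝒬 (each Q_i a finite union of half-open intervals with rational endpoints) with μ_i(Q_i) > 1/k for every i. -/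
open MeasureTheory Set Filter Topology Function
open scoped ENNReal symmDiff

/-!
Finite unions of intervals `[a, b)` with rational endpoints form a ring of sets generating the
Borel σ-algebra, so every Borel set is approximated by one in measure, for `ν = ∑ i, μ i` and
hence for all `μ i` at once. Approximate each `B j` by such a union `R j` so closely that the
total error `ν (⋃ j, R j ∆ B j)` is below every margin `μ i (B i) - 1/k`. Disjointifying the
`R j`, after giving the part of `[0,1)` they miss to the first piece, loses at most this error
for each `μ i`: a point of `B i` outside the `i`-th piece lies in `B i \ R i` or in some
`R j \ B j` with `j < i`, because the `B j` are disjoint.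
-/

/-- `R` is a finite union of half-open intervals `[a, b) ⊆ [0,1)` with rational
endpoints (an element of the algebra `ℛ`). -/
def IsRatIcoUnion (R : Set ℝ) : Prop :=
  ∃ s : Finset (ℚ × ℚ), (∀ p ∈ s, 0 ≤ p.1 ∧ p.2 ≤ 1) ∧
    R = ⋃ p ∈ s, Set.Ico (p.1 : ℝ) (p.2 : ℝ)

def ratIco : Set (Set ℝ) := range fun p : ℚ × ℚ => Ico (p.1 : ℝ) p.2

-- `max c d` rather than `d` keeps the two pieces disjoint also when `[c, d)` is empty.
lemma Ico_sdiff_Ico {α : Type*} [LinearOrder α] (a b c d : α) :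
    Ico a b \ Ico c d = Ico a (min b c) ∪ Ico (max a (max c d)) b := by
  ext x
  simp only [Set.mem_sdiff, mem_Ico, mem_union, lt_min_iff, max_le_iff]
  grind

lemma isSetSemiring_ratIco : IsSetSemiring ratIco where
  empty_mem := ⟨(0, 0), by simp⟩
  inter_mem := by
    rintro _ ⟨⟨a, b⟩, rfl⟩ _ ⟨⟨c, d⟩, rfl⟩
    exact ⟨(max a c, min b d), by simp [Ico_inter_Ico]⟩
  sdiff_eq_sUnion' := by
    classical
    rintro _ ⟨⟨a, b⟩, rfl⟩ _ ⟨⟨c, d⟩, rfl⟩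
    refine ⟨{Ico (a : ℝ) (min b c : ℚ), Ico ((max a (max c d) : ℚ) : ℝ) b}, ?_, ?_, ?_⟩
    · simp only [Finset.coe_insert, Finset.coe_singleton, insert_subset_iff, singleton_subset_iff]
      exact ⟨⟨(a, min b c), rfl⟩, ⟨(max a (max c d), b), rfl⟩⟩
    · simp only [Finset.coe_insert, Finset.coe_singleton]
      refine (pairwiseDisjoint_singleton _ _).insert fun _ hB _ => ?_
      rw [mem_singleton_iff.1 hB]
      refine Set.disjoint_left.2 fun x hx hx' => ?_
      simp only [id_eq, mem_Ico, Rat.cast_min, Rat.cast_max, lt_min_iff, max_le_iff] at hx hx'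
      linarith
    · simp [Ico_sdiff_Ico]

lemma Real.borel_eq_generateFrom_ratIco : borel ℝ = MeasurableSpace.generateFrom ratIco := by
  refine le_antisymm ?_ (MeasurableSpace.generateFrom_le ?_)
  · rw [Rat.denseRange_cast.borel_eq_generateFrom_Ico_mem]
    refine MeasurableSpace.generateFrom_mono ?_
    rintro _ ⟨_, ⟨a, rfl⟩, _, ⟨b, rfl⟩, -, rfl⟩
    exact ⟨(a, b), rfl⟩
  · rintro _ ⟨p, rfl⟩
    exact measurableSet_Ico

lemma Ico_zero_one_mem_ratIco : Ico (0 : ℝ) 1 ∈ ratIco := ⟨(0, 1), by simp⟩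

lemma isRatIcoUnion_iff {R : Set ℝ} :
    IsRatIcoUnion R ↔ R ∈ supClosure ratIco ∧ R ⊆ Ico 0 1 := by
  have hring := isSetSemiring_ratIco.isSetRing_supClosure
  constructor
  · rintro ⟨s, hs, rfl⟩
    refine ⟨hring.biUnion_mem s fun p _ => subset_supClosure ⟨p, rfl⟩,
      iUnion₂_subset fun p hp => Ico_subset_Ico ?_ ?_⟩
    · exact_mod_cast (hs p hp).1
    · exact_mod_cast (hs p hp).2
  · rintro ⟨hR, hsub⟩
    suffices supClosure ratIco ⊆ {R | IsRatIcoUnion (R ∩ Ico 0 1)} by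
      simpa [inter_eq_left.2 hsub] using this hR
    refine supClosure_min ?_ fun R ⟨s, hs01, hs⟩ S ⟨t, ht01, ht⟩ => ?_
    · rintro _ ⟨⟨a, b⟩, rfl⟩
      refine ⟨{(max a 0, min b 1)}, by simp, ?_⟩
      simp [Ico_inter_Ico]
    · classical
      refine ⟨s ∪ t, ?_, ?_⟩
      · exact fun p hp => (Finset.mem_union.1 hp).elim (hs01 p) (ht01 p)
      · rw [show (R ⊔ S) ∩ Ico 0 1 = R ∩ Ico 0 1 ∪ S ∩ Ico 0 1 from union_inter_distrib_right ..,
          hs, ht, Finset.set_biUnion_union]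

lemma isSetRing_isRatIcoUnion : IsSetRing {R | IsRatIcoUnion R} := by
  have hring := isSetSemiring_ratIco.isSetRing_supClosure
  simp only [isRatIcoUnion_iff]
  exact
  { empty_mem := ⟨hring.empty_mem, empty_subset _⟩
    union_mem := fun _ _ hR hS => ⟨hring.union_mem hR.1 hS.1, union_subset hR.2 hS.2⟩
    sdiff_mem := fun _ _ hR hS => ⟨hring.sdiff_mem hR.1 hS.1, sdiff_subset.trans hR.2⟩ }

lemma exists_isRatIcoUnion_measure_symmDiff_lt (ν : Measure ℝ) [IsFiniteMeasure ν]
    (hν : ν (Ico 0 1)ᶜ = 0) {s : Set ℝ} (hs : MeasurableSet s) {ε : ℝ≥0∞} (hε : 0 < ε) :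
    ∃ R, IsRatIcoUnion R ∧ ν (R ∆ s) < ε := by
  obtain ⟨t, ht, hts⟩ := exists_measure_symmDiff_lt_of_generateFrom_isSetSemiring
    isSetSemiring_ratIco ⟨{Ico 0 1}, countable_singleton _,
      singleton_subset_iff.2 Ico_zero_one_mem_ratIco, by simpa using hν⟩
    Real.borel_eq_generateFrom_ratIco hs hε
  refine ⟨t ∩ Ico 0 1, isRatIcoUnion_iff.2 ⟨isSetSemiring_ratIco.isSetRing_supClosure.inter_mem
    ht (subset_supClosure Ico_zero_one_mem_ratIco), inter_subset_right⟩, ?_⟩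
  calc ν ((t ∩ Ico 0 1) ∆ s) ≤ ν (t ∆ s ∪ (Ico 0 1)ᶜ) := by
        refine measure_mono fun x hx => ?_
        simp only [mem_symmDiff, mem_inter_iff, mem_union, mem_compl_iff] at hx ⊢
        tauto
    _ ≤ ν (t ∆ s) + ν (Ico 0 1)ᶜ := measure_union_le _ _
    _ < ε := by rwa [hν, add_zero]

lemma ENNReal.exists_pos_forall_add_lt {ι : Type*} [Finite ι] {a : ℝ≥0∞} {b : ι → ℝ≥0∞}
    (h : ∀ i, a < b i) : ∃ η > 0, ∀ i, a + η < b i := by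
  have hnear : ∀ᶠ η in 𝓝 0, ∀ i, a + η < b i := eventually_all.2 fun i =>
    (continuous_const_add a).tendsto' 0 a (add_zero a) |>.eventually (eventually_lt_nhds (h i))
  obtain ⟨η, hη, hη0⟩ :=
    ((hnear.filter_mono nhdsWithin_le_nhds).and (self_mem_nhdsWithin (s := Ioi 0))).exists
  exact ⟨η, hη0, hη⟩

lemma exists_measure_iUnion_symmDiff_lt {α ι : Type*} [MeasurableSpace α] [Fintype ι]
    [Nonempty ι] (ν : Measure α) (P : Set α → Prop) (B : ι → Set α)
    (happrox : ∀ j ε, 0 < ε → ∃ R, P R ∧ ν (R ∆ B j) < ε) {ε : ℝ≥0∞} (hε : 0 < ε) :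
    ∃ R : ι → Set α, (∀ j, P (R j)) ∧ ν (⋃ j, R j ∆ B j) < ε := by
  have hε' : 0 < ε / Fintype.card ι := ENNReal.div_pos hε.ne' (ENNReal.natCast_ne_top _)
  choose R hRP hRε using fun j => happrox j _ hε'
  refine ⟨R, hRP, ?_⟩
  calc ν (⋃ j, R j ∆ B j) ≤ ∑ j, ν (R j ∆ B j) := measure_iUnion_fintype_le _ _
    _ < ∑ _j : ι, ε / Fintype.card ι :=
      ENNReal.sum_lt_sum_of_nonempty Finset.univ_nonempty fun j _ => hRε j
    _ ≤ ε := by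
      rw [Finset.sum_const, Finset.card_univ, nsmul_eq_mul]
      exact ENNReal.mul_div_le

lemma lt_measure_of_sdiff_subset {α : Type*} [MeasurableSpace α] {μ ν : Measure α} (hμν : μ ≤ ν)
    {a : ℝ≥0∞} {B Q E : Set α} (hE : B \ Q ⊆ E) (hνE : ν E ≠ ∞) (h : a + ν E < μ B) :
    a < μ Q := by
  have hB : μ B ≤ μ Q + ν E := calc
    μ B ≤ μ (B ∩ Q) + μ (B \ Q) := measure_le_inter_add_sdiff μ B Q
    _ ≤ μ Q + ν E := add_le_add (measure_mono inter_subset_right) ((measure_mono hE).trans (hμν E))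
  exact (ENNReal.add_lt_add_iff_right hνE).1 (h.trans_le hB)

section DisjointedFill

variable {α ι : Type*} [LinearOrder ι] [LocallyFiniteOrderBot ι] (S : Set α) (R : ι → Set α)

-- The part of `S` missed by `R` is added to every piece; disjointifying leaves it in the first.
def disjointedFill : ι → Set α := disjointed fun j => R j ∪ (S \ ⋃ j, R j)

lemma pairwise_disjoint_disjointedFill : Pairwise (Disjoint on disjointedFill S R) :=
  disjoint_disjointed fun j => R j ∪ (S \ ⋃ j, R j)

lemma iUnion_disjointedFill [Nonempty ι] (hR : ∀ j, R j ⊆ S) : ⋃ j, disjointedFill S R j = S := by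
  rw [disjointedFill, iUnion_disjointed, ← iUnion_union, union_sdiff_cancel (iUnion_subset hR)]

lemma MeasureTheory.IsSetRing.disjointedFill_mem [Fintype ι] {C : Set (Set α)}
    (hC : IsSetRing C) (hS : S ∈ C) (hR : ∀ j, R j ∈ C) (i : ι) : disjointedFill S R i ∈ C := by
  have hU : ⋃ j, R j ∈ C := by simpa using hC.biUnion_mem Finset.univ fun j _ => hR j
  exact hC.disjointed_mem (fun j => hC.union_mem (hR j) (hC.sdiff_mem hS hU)) i

lemma sdiff_disjointedFill_subset {B : ι → Set α} (hB : Pairwise (Disjoint on B)) (i : ι) :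
    B i \ disjointedFill S R i ⊆ ⋃ j, R j ∆ B j := by
  intro x ⟨hxB, hxQ⟩
  simp only [disjointedFill, disjointed_eq_inter_compl, mem_inter_iff, mem_union, mem_iInter,
    mem_compl_iff, not_and, not_forall, not_not] at hxQ
  rw [mem_iUnion]
  by_cases hxR : x ∈ R i
  · obtain ⟨j, hji, hxj⟩ := hxQ (Or.inl hxR)
    have hxRj : x ∈ R j := hxj.resolve_right fun hL => hL.2 (mem_iUnion.2 ⟨i, hxR⟩)
    exact ⟨j, Or.inl ⟨hxRj, fun hxBj => (hB hji.ne).le_bot ⟨hxBj, hxB⟩⟩⟩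
  · exact ⟨i, Or.inr ⟨hxB, hxR⟩⟩

end DisjointedFill

theorem superfair_rational_partition_general
    (k : ℕ) (μ : Fin k → Measure ℝ) [∀ i, IsProbabilityMeasure (μ i)]
    (hsupp : ∀ i, μ i (Set.Ico (0 : ℝ) 1)ᶜ = 0)
    (B : Fin k → Set ℝ)
    (hmeas : ∀ j, MeasurableSet (B j))
    (hdisj : ∀ j j', j ≠ j' → Disjoint (B j) (B j'))
    (hcover : (⋃ j, B j) = Set.Ico (0 : ℝ) 1)
    (hfair : ∀ i, (k : ℝ≥0∞)⁻¹ < μ i (B i)) :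
    ∃ Q : Fin k → Set ℝ,
      (∀ j, IsRatIcoUnion (Q j)) ∧
      (∀ j j', j ≠ j' → Disjoint (Q j) (Q j')) ∧
      (⋃ j, Q j) = Set.Ico (0 : ℝ) 1 ∧
      ∀ i, (k : ℝ≥0∞)⁻¹ < μ i (Q i) := by
  have : Nonempty (Fin k) := by
    obtain ⟨j, -⟩ := mem_iUnion.1 (hcover ▸ left_mem_Ico.2 zero_lt_one : (0 : ℝ) ∈ ⋃ j, B j)
    exact ⟨j⟩
  let ν := Measure.sum μ
  have hν : ν (Ico 0 1)ᶜ = 0 := Measure.sum_apply_eq_zero.2 hsupp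
  obtain ⟨η, hη0, hη⟩ := ENNReal.exists_pos_forall_add_lt hfair
  obtain ⟨R, hR, hRB⟩ := exists_measure_iUnion_symmDiff_lt ν IsRatIcoUnion B
    (fun j _ hε => exists_isRatIcoUnion_measure_symmDiff_lt ν hν (hmeas j) hε) hη0
  refine ⟨disjointedFill (Ico 0 1) R, fun j => ?_, pairwise_disjoint_disjointedFill _ _,
    iUnion_disjointedFill _ R fun j => (isRatIcoUnion_iff.1 (hR j)).2, fun i => ?_⟩
  · exact isSetRing_isRatIcoUnion.disjointedFill_mem _ _ (isRatIcoUnion_iff.2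
      ⟨subset_supClosure Ico_zero_one_mem_ratIco, subset_rfl⟩) hR j
  · exact lt_measure_of_sdiff_subset (Measure.le_sum μ i) (sdiff_disjointedFill_subset _ _ hdisj i)
      (measure_ne_top ν _) ((add_le_add_right hRB.le _).trans_lt (hη i))

/-- If a super-fair Borel partition exists for non-atomic Borel probability measures
`μ 0, …, μ (k-1)` on `[0,1)`, then a super-fair partition exists in `𝒬`, i.e. one in
which every piece is a finite union of half-open intervals with rational endpoints. -/
theorem superfair_rational_partition
    (k : ℕ) (μ : Fin k → Measure ℝ) [∀ i, IsProbabilityMeasure (μ i)]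
    (hsupp : ∀ i, μ i (Set.Ico (0 : ℝ) 1)ᶜ = 0)
    (hatom : ∀ i (x : ℝ), μ i {x} = 0)
    (B : Fin k → Set ℝ)
    (hmeas : ∀ j, MeasurableSet (B j))
    (hdisj : ∀ j j', j ≠ j' → Disjoint (B j) (B j'))
    (hcover : (⋃ j, B j) = Set.Ico (0 : ℝ) 1)
    (hfair : ∀ i, (k : ℝ≥0∞)⁻¹ < μ i (B i)) :
    ∃ Q : Fin k → Set ℝ,
      (∀ j, IsRatIcoUnion (Q j)) ∧
      (∀ j j', j ≠ j' → Disjoint (Q j) (Q j')) ∧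
      (⋃ j, Q j) = Set.Ico (0 : ℝ) 1 ∧
      ∀ i, (k : ℝ≥0∞)⁻¹ < μ i (Q i) :=
  superfair_rational_partition_general k μ hsupp B hmeas hdisj hcover hfair
end

section
/- Let there be k players and a finite set C of n indivisible goods, where each player i has additive utility μ_i with μ_i({a}) ∈ {1,2,…,M} for every good a. Suppose player i declares truthfully (ν_i = μ_i) and the goods are allocated by Mechanism 3: goods are grouped into bins B_S = {a : ∀i, ν_i({a}) = s_i} indexed by S = (s_1,…,s_k) ∈ {1,…,M}^k, each bin of size |B_S| is split so that every player receives exactly ⌊|B_S|/k⌋ goods from it, and leftover goods are allocated arbitrarily. Then, with probability one, for every j the resulting allocation C_1,…,C_k satisfies μ_i(C_j) ≥ μ_i(C)/k − (M·k·M^k)/k = μ_i(C)/k − M^{k+1}. In particular, if M·k·M^k ≤ ε·μ_i(C) then μ_i(C_j) ≥ (1 − ε)·μ_i(C)/k, so a truthful player is deterministically guaranteed at least a (1 − ε) fraction of her expected share. -/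
/-! Sort the goods into bins by their vector of declared values. On a bin of size `b` whose
goods are each worth `w ≤ M` to player `i`, player `j` receives at least `⌊b / k⌋` goods, i.e.
at least `w * b / k - w ≥ w * b / k - M` of value. Summing over the at most `M ^ k` bins loses
at most `M * M ^ k` against the proportional share `μ(C) / k`. -/

open Finset

theorem Finset.sum_comp_eq_sum_mul_card_fiber {α κ : Type*} [DecidableEq κ]
    (s : Finset α) (T : Finset κ) (key : α → κ) (hkey : ∀ a ∈ s, key a ∈ T) (w : κ → ℕ) :
    ∑ a ∈ s, w (key a) = ∑ S ∈ T, w S * #{a ∈ s | key a = S} := by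
  rw [← sum_fiberwise_of_maps_to' hkey]
  simp only [sum_const, smul_eq_mul, mul_comm]

theorem Nat.mul_le_mul_mul_div_add_of_le {w M b k : ℕ} (hk : 0 < k) (hw : w ≤ M) :
    w * b ≤ k * (w * (b / k)) + M * k :=
  calc w * b ≤ w * (k * (b / k + 1)) := Nat.mul_le_mul_left w (Nat.lt_mul_div_succ b hk).le
    _ = k * (w * (b / k)) + w * k := by ring
    _ ≤ k * (w * (b / k)) + M * k := by gcongr

theorem sum_le_mul_sum_add_of_card_div_le {α κ : Type*} [Fintype α] [DecidableEq κ]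
    {k M : ℕ} (hk : 0 < k) (key : α → κ) (T : Finset κ) (hkey : ∀ a, key a ∈ T)
    (w : κ → ℕ) (hw : ∀ S ∈ T, w S ≤ M) (D : Finset α)
    (hD : ∀ S ∈ T, #{a | key a = S} / k ≤ #{a ∈ D | key a = S}) :
    ∑ a, w (key a) ≤ k * ∑ a ∈ D, w (key a) + M * k * #T := by
  rw [sum_comp_eq_sum_mul_card_fiber _ T key (fun a _ => hkey a),
    sum_comp_eq_sum_mul_card_fiber _ T key (fun a _ => hkey a)]
  calc ∑ S ∈ T, w S * #{a | key a = S}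
      ≤ ∑ S ∈ T, (k * (w S * (#{a | key a = S} / k)) + M * k) :=
        sum_le_sum fun S hS => Nat.mul_le_mul_mul_div_add_of_le hk (hw S hS)
    _ = k * ∑ S ∈ T, w S * (#{a | key a = S} / k) + M * k * #T := by
        rw [sum_add_distrib, ← mul_sum, sum_const, smul_eq_mul, mul_comm #T]
    _ ≤ k * ∑ S ∈ T, w S * #{a ∈ D | key a = S} + M * k * #T := by
        gcongr with S hS
        exact hD S hS

theorem div_sub_le_and_one_sub_mul_div_le_of_le_mul_add {t c m k : ℝ} (hk : 0 < k)
    (h : t ≤ k * c + k * m) :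
    t / k - m ≤ c ∧ ∀ ε : ℝ, k * m ≤ ε * t → (1 - ε) * t / k ≤ c := by
  refine ⟨?_, fun ε hε => ?_⟩
  · rw [sub_le_iff_le_add, div_le_iff₀ hk]
    linarith
  · rw [div_le_iff₀ hk]
    linarith

theorem mechanism_three_deterministic_guarantee_general
    (k n M : ℕ)
    (ν : Fin k → Fin n → ℕ)
    (hval : ∀ (i' : Fin k) (a : Fin n), ν i' a ∈ Finset.Icc 1 M)
    (i : Fin k) (μ : Fin n → ℕ) (htruth : ν i = μ)
    (B : (Fin k → ℕ) → Finset (Fin n))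
    (hB : ∀ S, B S = Finset.univ.filter (fun a => ∀ i', ν i' a = S i'))
    (C : Fin k → Finset (Fin n))
    (hfloor : ∀ (S : Fin k → ℕ) (j : Fin k), (B S).card / k ≤ (C j ∩ B S).card) :
    (∀ j, ((∑ a, μ a : ℕ) : ℝ) / k - (M : ℝ) ^ (k + 1) ≤ ((∑ a ∈ C j, μ a : ℕ) : ℝ)) ∧
    (∀ ε : ℝ, (M : ℝ) * k * (M : ℝ) ^ k ≤ ε * ((∑ a, μ a : ℕ) : ℝ) →
      ∀ j, (1 - ε) * ((∑ a, μ a : ℕ) : ℝ) / k ≤ ((∑ a ∈ C j, μ a : ℕ) : ℝ)) := by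
  subst htruth
  set T := Fintype.piFinset fun _ : Fin k => Icc 1 M
  have hkey (a : Fin n) : (fun i' => ν i' a) ∈ T := Fintype.mem_piFinset.2 (hval · a)
  have hT : #T = M ^ k := by simp [T, Fintype.card_piFinset]
  have hbin (S : Fin k → ℕ) (s : Finset (Fin n)) :
      s ∩ B S = {a ∈ s | (fun i' => ν i' a) = S} := by
    ext a
    simp [hB, funext_iff]
  have hnat (j : Fin k) : ∑ a, ν i a ≤ k * ∑ a ∈ C j, ν i a + M * k * M ^ k := by
    refine hT ▸ sum_le_mul_sum_add_of_card_div_le i.pos _ T hkey (· i)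
      (fun S hS => (mem_Icc.1 (Fintype.mem_piFinset.1 hS i)).2) (C j) fun S _ => ?_
    simpa [← hbin] using hfloor S j
  have hreal (j : Fin k) : ((∑ a, ν i a : ℕ) : ℝ)
      ≤ k * ((∑ a ∈ C j, ν i a : ℕ) : ℝ) + k * (M : ℝ) ^ (k + 1) := by
    rw [pow_succ]
    exact_mod_cast (hnat j).trans_eq (by ring)
  have hk : (0 : ℝ) < k := by exact_mod_cast i.pos
  refine ⟨fun j => (div_sub_le_and_one_sub_mul_div_le_of_le_mul_add hk (hreal j)).1,
    fun ε hε j => (div_sub_le_and_one_sub_mul_div_le_of_le_mul_add hk (hreal j)).2 ε ?_⟩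
  rw [pow_succ]
  linarith

/-- Deterministic guarantee of Mechanism 3 for a truthful player: goods are binned by
the vector of declared per-good values `S : Fin k → ℕ` (all values lie in `{1, …, M}`),
each player receives at least `⌊|B_S| / k⌋` goods from every bin `B_S`, and leftovers
are allocated arbitrarily. If player `i` declares truthfully (`ν i = μ`, her true
additive utility), then with probability one every share `C j` satisfies
`μ(C j) ≥ μ(C)/k − M^(k+1) = μ(C)/k − (M·k·M^k)/k`; in particular, whenever
`M·k·M^k ≤ ε·μ(C)` one gets `μ(C j) ≥ (1 − ε)·μ(C)/k`. -/
theorem mechanism_three_deterministic_guarantee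
    (k n M : ℕ) (hk : 0 < k)
    (ν : Fin k → Fin n → ℕ)
    (hval : ∀ (i' : Fin k) (a : Fin n), ν i' a ∈ Finset.Icc 1 M)
    (i : Fin k) (μ : Fin n → ℕ) (htruth : ν i = μ)
    (B : (Fin k → ℕ) → Finset (Fin n))
    (hB : ∀ S, B S = Finset.univ.filter (fun a => ∀ i', ν i' a = S i'))
    (C : Fin k → Finset (Fin n))
    (hdisj : ∀ j j', j ≠ j' → Disjoint (C j) (C j'))
    (hcover : ∀ a, ∃ j, a ∈ C j)
    (hfloor : ∀ (S : Fin k → ℕ) (j : Fin k), (B S).card / k ≤ (C j ∩ B S).card) :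
    (∀ j, ((∑ a, μ a : ℕ) : ℝ) / k - (M : ℝ) ^ (k + 1) ≤ ((∑ a ∈ C j, μ a : ℕ) : ℝ)) ∧
    (∀ ε : ℝ, (M : ℝ) * k * (M : ℝ) ^ k ≤ ε * ((∑ a, μ a : ℕ) : ℝ) →
      ∀ j, (1 - ε) * ((∑ a, μ a : ℕ) : ℝ) / k ≤ ((∑ a ∈ C j, μ a : ℕ) : ℝ)) :=
  mechanism_three_deterministic_guarantee_general k n M ν hval i μ htruth B hB C hfloor
end
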